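/- arXiv:1606.03971 — 7 statements merged into one kernel-verified Lean document; each statement's English description precedes it below -/
import Mathlib

section
/- Let K ≥ 1 and 1 ≤ L ≤ K be integers, n ≥ 2 an integer, p ∈ (0,1], and P_1,…,P_K > 0. Suppose ν* ∈ ℝ and b* ∈ [0,1]^K satisfy ∑_{i=1}^K b_i* = L, and for each i: b_i* = 0 whenever ν* < −P_i n p; b_i* = 1 whenever ν* > −P_i n p (1−p)^{n−1}; and otherwise b_i* = (1/p)·[1 − (−ν*/(P_i n p))^{1/(n−1)}]. Then b* maximizes H_n(b) = ∑_{i=1}^K P_i (1 − (1 − b_i p)^n) over the feasible set D_L = {b ∈ [0,1]^K : ∑_{i=1}^K b_i = L}. -/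
/-!
Each summand `x ↦ P (1 - (1 - x p)^n)` is concave on `[0, 1]`, so it lies below its tangent
line at `b*`, whose slope is the marginal gain `P n p (1 - b* p)^(n-1)`. The three cases of the
description of `b*` are exactly the KKT conditions with multiplier `-ν*`: the marginal gain is
at most `-ν*` where `b* = 0`, at least `-ν*` where `b* = 1`, and equal to `-ν*` otherwise. Hence
every summand of `H_n(c) - H_n(b*)` is at most `-ν* (c_i - b*_i)`, and these sum to zero on `D_L`.
-/

open Set

lemma mul_one_sub_one_sub_pow_le_tangent {P p x y : ℝ} (n : ℕ) (hP : 0 ≤ P)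
    (hx : x * p ≤ 1) (hy : y * p ≤ 1) :
    P * (1 - (1 - x * p) ^ n) ≤
      P * (1 - (1 - y * p) ^ n) + P * n * p * (1 - y * p) ^ (n - 1) * (x - y) := by
  have bernoulli := pow_add_mul_le_add_pow (a := 1 - y * p) (b := (y - x) * p)
    (by linarith) (by linarith) n
  rw [show 1 - y * p + (y - x) * p = 1 - x * p by ring] at bernoulli
  nlinarith [mul_le_mul_of_nonneg_left bernoulli hP]

lemma mul_sub_le_mul_sub_of_kkt {g μ x y : ℝ} (hx : x ∈ Icc (0 : ℝ) 1)
    (h : y = 0 ∧ g ≤ μ ∨ y = 1 ∧ μ ≤ g ∨ g = μ) : g * (x - y) ≤ μ * (x - y) := by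
  rcases h with ⟨rfl, h⟩ | ⟨rfl, h⟩ | rfl
  · exact mul_le_mul_of_nonneg_right h (by linarith [hx.1])
  · exact mul_le_mul_of_nonpos_right h (by linarith [hx.2])
  · exact le_rfl

lemma rpow_one_div_sub_one_pow {r : ℝ} (hr : 0 ≤ r) {n : ℕ} (hn : 2 ≤ n) :
    (r ^ ((1 : ℝ) / ((n : ℝ) - 1))) ^ (n - 1) = r := by
  have hcast : (n : ℝ) - 1 = ((n - 1 : ℕ) : ℝ) := by
    rw [Nat.cast_sub (by omega), Nat.cast_one]
  rw [hcast, one_div, Real.rpow_inv_natCast_pow hr (by omega)]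

lemma kkt_of_policy1_allocation {P p ν y : ℝ} {n : ℕ} (hn : 2 ≤ n) (hp : p ∈ Ioc (0 : ℝ) 1)
    (hP : 0 < P)
    (hzero : ν < -(P * n * p) → y = 0)
    (hone : -(P * n * p * (1 - p) ^ (n - 1)) < ν → y = 1)
    (hmid : -(P * n * p) ≤ ν → ν ≤ -(P * n * p * (1 - p) ^ (n - 1)) →
      y = (1 / p) * (1 - (-ν / (P * n * p)) ^ ((1 : ℝ) / ((n : ℝ) - 1)))) :
    let g := P * n * p * (1 - y * p) ^ (n - 1)
    y = 0 ∧ g ≤ -ν ∨ y = 1 ∧ -ν ≤ g ∨ g = -ν := by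
  intro g
  obtain ⟨hp0, hp1⟩ := hp
  have hA : 0 < P * n * p := by
    have : (0 : ℝ) < n := by exact_mod_cast (by omega : 0 < n)
    positivity
  rcases lt_or_ge ν (-(P * n * p)) with hlow | hlow
  · have hy := hzero hlow
    refine Or.inl ⟨hy, ?_⟩
    simp only [g, hy, zero_mul, sub_zero, one_pow, mul_one]
    linarith
  rcases lt_or_ge (-(P * n * p * (1 - p) ^ (n - 1))) ν with hhigh | hhigh
  · have hy := hone hhigh
    refine Or.inr (Or.inl ⟨hy, ?_⟩)
    simp only [g, hy, one_mul]
    linarith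
  · have hratio : 0 ≤ -ν / (P * n * p) := by
      have := pow_nonneg (sub_nonneg.mpr hp1) (n - 1)
      exact div_nonneg (by nlinarith) hA.le
    have hroot : 1 - y * p = (-ν / (P * n * p)) ^ ((1 : ℝ) / ((n : ℝ) - 1)) := by
      rw [hmid hlow hhigh]
      field_simp
      ring
    refine Or.inr (Or.inr ?_)
    simp only [g, hroot, rpow_one_div_sub_one_pow hratio hn]
    field_simp

theorem kkt_point_maximizes_hit_prob_policy1_general
    (K L n : ℕ) (hn : 2 ≤ n)
    (p : ℝ) (hp : p ∈ Set.Ioc (0 : ℝ) 1) (P : Fin K → ℝ) (hP : ∀ i, 0 < P i)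
    (ν : ℝ) (b : Fin K → ℝ)
    (hbmem : ∀ i, b i ∈ Set.Icc (0 : ℝ) 1)
    (hsum : ∑ i, b i = (L : ℝ))
    (hzero : ∀ i, ν < -(P i * n * p) → b i = 0)
    (hone : ∀ i, -(P i * n * p * (1 - p) ^ (n - 1)) < ν → b i = 1)
    (hmid : ∀ i, -(P i * n * p) ≤ ν → ν ≤ -(P i * n * p * (1 - p) ^ (n - 1)) →
      b i = (1 / p) * (1 - (-ν / (P i * n * p)) ^ ((1 : ℝ) / ((n : ℝ) - 1)))) :
    ∀ c : Fin K → ℝ, (∀ i, c i ∈ Set.Icc (0 : ℝ) 1) → ∑ i, c i = (L : ℝ) →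
      ∑ i, P i * (1 - (1 - c i * p) ^ n) ≤ ∑ i, P i * (1 - (1 - b i * p) ^ n) := by
  intro c hc hcsum
  have hmul_le_one : ∀ x ∈ Icc (0 : ℝ) 1, x * p ≤ 1 := fun x hx =>
    mul_le_one₀ hx.2 hp.1.le hp.2
  have summand_le : ∀ i, P i * (1 - (1 - c i * p) ^ n) ≤
      P i * (1 - (1 - b i * p) ^ n) + -ν * (c i - b i) := fun i =>
    (mul_one_sub_one_sub_pow_le_tangent n (hP i).le (hmul_le_one _ (hc i))
      (hmul_le_one _ (hbmem i))).trans <| add_le_add_right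
        (mul_sub_le_mul_sub_of_kkt (hc i)
          (kkt_of_policy1_allocation hn hp (hP i) (hzero i) (hone i) (hmid i))) _
  have multiplier_term : ∑ i, -ν * (c i - b i) = 0 := by
    rw [← Finset.mul_sum, Finset.sum_sub_distrib, hcsum, hsum, sub_self, mul_zero]
  calc ∑ i, P i * (1 - (1 - c i * p) ^ n)
      ≤ ∑ i, (P i * (1 - (1 - b i * p) ^ n) + -ν * (c i - b i)) :=
        Finset.sum_le_sum fun i _ => summand_le i
    _ = ∑ i, P i * (1 - (1 - b i * p) ^ n) := by
        rw [Finset.sum_add_distrib, multiplier_term, add_zero]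

/-- If `b*` together with a multiplier `ν*` satisfies the KKT-form
description from Theorem 1 (policy 1, mobile user), then `b*` maximizes the
hit probability `H_n` over `D_L = {b ∈ [0,1]^K : ∑ b i = L}`. -/
theorem kkt_point_maximizes_hit_prob_policy1
    (K L n : ℕ) (hK : 1 ≤ K) (hL1 : 1 ≤ L) (hLK : L ≤ K) (hn : 2 ≤ n)
    (p : ℝ) (hp : p ∈ Set.Ioc (0 : ℝ) 1) (P : Fin K → ℝ) (hP : ∀ i, 0 < P i)
    (ν : ℝ) (b : Fin K → ℝ)
    (hbmem : ∀ i, b i ∈ Set.Icc (0 : ℝ) 1)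
    (hsum : ∑ i, b i = (L : ℝ))
    (hzero : ∀ i, ν < -(P i * n * p) → b i = 0)
    (hone : ∀ i, -(P i * n * p * (1 - p) ^ (n - 1)) < ν → b i = 1)
    (hmid : ∀ i, -(P i * n * p) ≤ ν → ν ≤ -(P i * n * p * (1 - p) ^ (n - 1)) →
      b i = (1 / p) * (1 - (-ν / (P i * n * p)) ^ ((1 : ℝ) / ((n : ℝ) - 1)))) :
    ∀ c : Fin K → ℝ, (∀ i, c i ∈ Set.Icc (0 : ℝ) 1) → ∑ i, c i = (L : ℝ) →
      ∑ i, P i * (1 - (1 - c i * p) ^ n) ≤ ∑ i, P i * (1 - (1 - b i * p) ^ n) :=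
  kkt_point_maximizes_hit_prob_policy1_general K L n hn p hp P hP ν b hbmem hsum hzero hone hmid
end

section
/- Fix γ > 0, p ∈ (0,1), an integer n ≥ 2, and let P_1 = 1/(1 + 2^{−γ}) and P_2 = 2^{−γ}/(1 + 2^{−γ}) (the Zipf distribution with parameter γ on 2 files). Let a = 2^{γ/(n−1)} and define g(b) = P_1 (1 − (1 − b p)^n) + P_2 (1 − (1 − (1−b) p)^n) for b ∈ [0,1]. If n < 1 + γ/log₂(1/(1−p)), then b = 1 maximizes g on [0,1]; otherwise b* = (a − 1 + p)/((a + 1) p) lies in [0,1] and maximizes g on [0,1]. -/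
/-!
Each term `1 - (1 - x p)^n` is concave in `x`, so the hit probability lies below its tangent line
at any `c ∈ [0,1]`, and `c` maximises it on `[0,1]` as soon as the marginal gain at `c` has the
sign of `c - b` for every `b ∈ [0,1]`. Because `P₂ 2^γ = P₁`, the marginal gain at `c = 1` is
positive when `(n - 1) log₂ (1/(1-p)) < γ`; otherwise it vanishes at `b*`, which lies in `[0,1]`
because `a (1 - p) ≤ 1`.
-/

open Real Set

noncomputable def twoFileHitProb (P₁ P₂ p : ℝ) (n : ℕ) (b : ℝ) : ℝ :=
  P₁ * (1 - (1 - b * p) ^ n) + P₂ * (1 - (1 - (1 - b) * p) ^ n)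

/-- The derivative of `twoFileHitProb P₁ P₂ p (m + 1)` at `c`, divided by `(m + 1) p`. -/
noncomputable def twoFileMarginal (P₁ P₂ p : ℝ) (m : ℕ) (c : ℝ) : ℝ :=
  P₁ * (1 - c * p) ^ m - P₂ * (1 - (1 - c) * p) ^ m

theorem twoFileHitProb_le_of_marginal {P₁ P₂ p b c : ℝ} {m : ℕ} (hP₁ : 0 ≤ P₁) (hP₂ : 0 ≤ P₂)
    (hp : p ∈ Icc (0 : ℝ) 1) (hb : b ∈ Icc (0 : ℝ) 1) (hc : c ∈ Icc (0 : ℝ) 1)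
    (hmarg : 0 ≤ twoFileMarginal P₁ P₂ p m c * (c - b)) :
    twoFileHitProb P₁ P₂ p (m + 1) b ≤ twoFileHitProb P₁ P₂ p (m + 1) c := by
  obtain ⟨hp₀, hp₁⟩ := hp
  obtain ⟨hb₀, hb₁⟩ := hb
  obtain ⟨hc₀, hc₁⟩ := hc
  have tangent {x y : ℝ} (hx : 0 ≤ x) (hy : 0 ≤ y) :
      y ^ (m + 1) + (m + 1 : ℕ) * y ^ m * (x - y) ≤ x ^ (m + 1) := by
    simpa using pow_add_mul_le_add_pow hy (by linarith : 0 ≤ 2 * y + (x - y)) (m + 1)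
  have h₁ := tangent (x := 1 - b * p) (y := 1 - c * p) (by nlinarith) (by nlinarith)
  have h₂ := tangent (x := 1 - (1 - b) * p) (y := 1 - (1 - c) * p) (by nlinarith) (by nlinarith)
  unfold twoFileHitProb
  unfold twoFileMarginal at hmarg
  linear_combination P₁ * h₁ + P₂ * h₂ + (m + 1 : ℕ) * p * hmarg

theorem one_lt_rpow_mul_one_sub_pow {γ p : ℝ} (hp : p < 1) {m : ℕ}
    (h : m * logb 2 (1 / (1 - p)) < γ) : 1 < (2 : ℝ) ^ γ * (1 - p) ^ m := by
  have hp' : 0 < 1 - p := by linarith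
  have hlt : (1 / (1 - p)) ^ m < (2 : ℝ) ^ γ := by
    rwa [← logb_lt_iff_lt_rpow one_lt_two (by positivity), logb_pow]
  rwa [one_div_pow, div_lt_iff₀ (by positivity)] at hlt

theorem mul_one_sub_le_one_of_div_le_logb {γ p : ℝ} (hp : p < 1) {m : ℝ}
    (h : γ / m ≤ logb 2 (1 / (1 - p))) : (2 : ℝ) ^ (γ / m) * (1 - p) ≤ 1 := by
  have hp' : 0 < 1 - p := by linarith
  rwa [le_logb_iff_rpow_le one_lt_two (by positivity), le_div_iff₀ hp'] at h

theorem div_mem_Icc_of_mul_one_sub_le_one {a p : ℝ} (hp : 0 < p) (ha : 1 ≤ a)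
    (hap : a * (1 - p) ≤ 1) : (a - 1 + p) / ((a + 1) * p) ∈ Icc (0 : ℝ) 1 := by
  have hden : 0 < (a + 1) * p := by positivity
  exact ⟨div_nonneg (by linarith) hden.le, (div_le_one hden).2 (by nlinarith)⟩

theorem twoFileMarginal_eq_zero_of_mul_pow_eq {P₁ P₂ a p : ℝ} {m : ℕ} (hp : p ≠ 0)
    (ha : a + 1 ≠ 0) (hP : P₂ * a ^ m = P₁) :
    twoFileMarginal P₁ P₂ p m ((a - 1 + p) / ((a + 1) * p)) = 0 := by
  -- `b* = (a - 1 + p) / ((a + 1) p)` is the solution of `1 - (1 - b) p = a (1 - b p)`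
  have hrel : 1 - (1 - (a - 1 + p) / ((a + 1) * p)) * p
      = a * (1 - (a - 1 + p) / ((a + 1) * p) * p) := by
    field_simp
    ring
  rw [twoFileMarginal, hrel, mul_pow, ← mul_assoc, hP, sub_self]

/-- Optimal caching for a 2-file Zipf library (`K = 2`, `L = 1`)
under policy 1: if `n < 1 + γ / log₂(1/(1−p))` then caching only the most
popular file (`b = 1`) is optimal; otherwise `b* = (a − 1 + p)/((a + 1) p)`
with `a = 2^{γ/(n−1)}` lies in `[0,1]` and is optimal. -/
theorem two_file_optimal_cache
    (γ p : ℝ) (hγ : 0 < γ) (hp : p ∈ Set.Ioo (0 : ℝ) 1) (n : ℕ) (hn : 2 ≤ n)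
    (P1 P2 a : ℝ)
    (hP1 : P1 = 1 / (1 + (2 : ℝ) ^ (-γ)))
    (hP2 : P2 = (2 : ℝ) ^ (-γ) / (1 + (2 : ℝ) ^ (-γ)))
    (ha : a = (2 : ℝ) ^ (γ / ((n : ℝ) - 1)))
    (g : ℝ → ℝ)
    (hg : g = fun b => P1 * (1 - (1 - b * p) ^ n) + P2 * (1 - (1 - (1 - b) * p) ^ n)) :
    (((n : ℝ) < 1 + γ / Real.logb 2 (1 / (1 - p))) →
        ∀ b ∈ Set.Icc (0 : ℝ) 1, g b ≤ g 1) ∧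
    (¬ ((n : ℝ) < 1 + γ / Real.logb 2 (1 / (1 - p))) →
        (a - 1 + p) / ((a + 1) * p) ∈ Set.Icc (0 : ℝ) 1 ∧
        ∀ b ∈ Set.Icc (0 : ℝ) 1, g b ≤ g ((a - 1 + p) / ((a + 1) * p))) := by
  obtain ⟨hp₀, hp₁⟩ := hp
  obtain ⟨m, rfl⟩ : ∃ m, n = m + 1 := ⟨n - 1, by omega⟩
  have hm₀ : (0 : ℝ) < m := by exact_mod_cast (by omega : 0 < m)
  have hm : ((m + 1 : ℕ) : ℝ) - 1 = m := by push_cast; ring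
  have hL : 0 < logb 2 (1 / (1 - p)) :=
    logb_pos one_lt_two (by rw [lt_div_iff₀ (by linarith)]; linarith)
  have hP₁ : 0 < P1 := by rw [hP1]; positivity
  have hP₂ : 0 < P2 := by rw [hP2]; positivity
  have hP : P2 * 2 ^ γ = P1 := by
    rw [hP1, hP2, rpow_neg zero_le_two]
    field_simp
  subst hg
  refine ⟨fun hlt b hb => ?_, fun hge => ?_⟩
  · have hgain : 1 < 2 ^ γ * (1 - p) ^ m := by
      refine one_lt_rpow_mul_one_sub_pow hp₁ ((lt_div_iff₀ hL).1 ?_)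
      push_cast at hlt
      linarith
    have hmarg : twoFileMarginal P1 P2 p m 1 = P2 * (2 ^ γ * (1 - p) ^ m - 1) := by
      rw [twoFileMarginal, ← hP]
      ring
    exact twoFileHitProb_le_of_marginal hP₁.le hP₂.le ⟨hp₀.le, hp₁.le⟩ hb ⟨zero_le_one, le_rfl⟩
      (by
        rw [hmarg]
        exact mul_nonneg (mul_nonneg hP₂.le (sub_nonneg.2 hgain.le)) (sub_nonneg.2 hb.2))
  · rw [hm] at ha
    have hγm : γ / m ≤ logb 2 (1 / (1 - p)) := by
      rw [not_lt] at hge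
      push_cast at hge
      rw [div_le_iff₀ hm₀, ← div_le_iff₀' hL]
      linarith
    have ham : a ^ m = 2 ^ γ := by
      rw [ha, ← rpow_mul_natCast zero_le_two, div_mul_cancel₀ _ hm₀.ne']
    have ha₁ : 1 ≤ a := ha ▸ one_le_rpow one_le_two (by positivity)
    have hc := div_mem_Icc_of_mul_one_sub_le_one hp₀ ha₁
      (ha ▸ mul_one_sub_le_one_of_div_le_logb hp₁ hγm)
    refine ⟨hc, fun b hb => twoFileHitProb_le_of_marginal hP₁.le hP₂.le ⟨hp₀.le, hp₁.le⟩ hb hc ?_⟩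
    rw [twoFileMarginal_eq_zero_of_mul_pow_eq hp₀.ne' (by linarith) (by rw [ham, hP]), zero_mul]
end

section
/- Fix γ > 0, p ∈ (0,1), an integer n ≥ 2, and set P_1 = 1/(1 + 2^{−γ}), P_2 = 2^{−γ}/(1 + 2^{−γ}), and a = 2^{γ/(n−1)}. Then b* = (a − 1 + p)/((a + 1) p) satisfies the stationarity equation P_1 (1 − b* p)^{n−1} = P_2 (1 − (1 − b*) p)^{n−1}. -/
/-- The point `b* = (a − 1 + p)/((a + 1) p)` with `a = 2^{γ/(n−1)}`
satisfies the interior stationarity equation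
`P₁ (1 − b* p)^{n−1} = P₂ (1 − (1 − b*) p)^{n−1}` for the 2-file Zipf library. -/
theorem two_file_stationarity
    (γ p : ℝ) (hγ : 0 < γ) (hp : p ∈ Set.Ioo (0 : ℝ) 1) (n : ℕ) (hn : 2 ≤ n)
    (P1 P2 a b : ℝ)
    (hP1 : P1 = 1 / (1 + (2 : ℝ) ^ (-γ)))
    (hP2 : P2 = (2 : ℝ) ^ (-γ) / (1 + (2 : ℝ) ^ (-γ)))
    (ha : a = (2 : ℝ) ^ (γ / ((n : ℝ) - 1)))
    (hb : b = (a - 1 + p) / ((a + 1) * p)) :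
    P1 * (1 - b * p) ^ (n - 1) = P2 * (1 - (1 - b) * p) ^ (n - 1) := by
  obtain ⟨hp0, hp1⟩ := hp
  have ha0 : 0 < a := ha ▸ Real.rpow_pos_of_pos (by norm_num) _
  have ha1 : a + 1 ≠ 0 := by positivity
  have hm : ((n : ℝ) - 1) ≠ 0 := by
    have : (2 : ℝ) ≤ (n : ℝ) := by exact_mod_cast hn
    linarith
  -- a ^ (n-1) = 2 ^ γ
  have hpow : a ^ (n - 1) = (2 : ℝ) ^ γ := by
    rw [ha, ← Real.rpow_natCast ((2:ℝ) ^ (γ / ((n:ℝ) - 1))) (n - 1),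
      ← Real.rpow_mul (by norm_num)]
    congr 1
    have : ((n - 1 : ℕ) : ℝ) = (n : ℝ) - 1 := by
      have : 1 ≤ n := by omega
      push_cast [Nat.cast_sub this]; ring
    rw [this]
    field_simp
  have h1 : 1 - b * p = (2 - p) / (a + 1) := by
    rw [hb]; field_simp; ring
  have h2 : 1 - (1 - b) * p = a * ((2 - p) / (a + 1)) := by
    rw [hb]; field_simp; ring
  have hP : P1 = P2 * (2 : ℝ) ^ γ := by
    have h2γ : (2 : ℝ) ^ (-γ) * (2:ℝ) ^ γ = 1 := by
      rw [← Real.rpow_add (by norm_num)]; simp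
    have hden : (1 + (2 : ℝ) ^ (-γ)) ≠ 0 := by positivity
    rw [hP1, hP2]; field_simp; linarith [h2γ]
  rw [h1, h2, mul_pow, hpow, hP]; ring
end

section
/- Let K ≥ 1, n ≥ 1 an integer, ρ1 > 0, 0 < ρ2 < 1, P_1,…,P_K ≥ 0, and define f(b) = b/((1−ρ2) b + ρ1 + ρ2). Then the function G_n(b) = ∑_{i=1}^K P_i (1 − (1 − f(b_i))^n) is concave on [0,1]^K. -/
/-!
With `c = 1 - ρ₂ > 0` and `d = ρ₁ + ρ₂ > 0`, partial fractions give
`f b = 1/c - (d/c) (c b + d)⁻¹`, so `f` is concave where `c b + d > 0`, and `f ≤ 1` on `[0, 1]`.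
Hence `1 - f` is convex and nonnegative on `[0, 1]`, so is `(1 - f)ⁿ`, and every summand
`P i (1 - (1 - f (b i))ⁿ)` is a concave function of the single coordinate `b i`. Their sum is
concave on the cube.
-/

open Set

theorem ConcaveOn.one_sub_one_sub_pow {𝕜 E : Type*} [CommRing 𝕜] [LinearOrder 𝕜]
    [IsStrictOrderedRing 𝕜] [AddCommGroup E] [Module 𝕜 E] {s : Set E} {g : E → 𝕜}
    (hg : ConcaveOn 𝕜 s g) (hg₁ : ∀ x ∈ s, g x ≤ 1) (n : ℕ) :
    ConcaveOn 𝕜 s fun x => 1 - (1 - g x) ^ n :=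
  (concaveOn_const 1 hg.1).sub
    (((convexOn_const 1 hg.1).sub hg).pow (fun x hx => sub_nonneg.2 (hg₁ x hx)) n)

theorem concaveOn_finset_sum {𝕜 E β ι : Type*} [Semiring 𝕜] [PartialOrder 𝕜]
    [AddCommMonoid E] [SMul 𝕜 E] [AddCommMonoid β] [PartialOrder β] [IsOrderedAddMonoid β]
    [Module 𝕜 β] {s : Set E} {f : ι → E → β} (t : Finset ι) (hs : Convex 𝕜 s)
    (hf : ∀ i ∈ t, ConcaveOn 𝕜 s (f i)) :
    ConcaveOn 𝕜 s fun x => ∑ i ∈ t, f i x := by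
  classical
  induction t using Finset.induction with
  | empty => simpa using concaveOn_const (0 : β) hs
  | insert j t hj ih =>
    simp_rw [Finset.sum_insert hj]
    exact (hf j (t.mem_insert_self j)).add (ih fun i hi => hf i (Finset.mem_insert_of_mem hi))

section LinearOrderedField

variable {𝕜 : Type*} [Field 𝕜] [LinearOrder 𝕜] [IsStrictOrderedRing 𝕜]

theorem convexOn_inv_mul_add (c d : 𝕜) :
    ConvexOn 𝕜 {x | 0 < c * x + d} fun x => (c * x + d)⁻¹ := by
  have h := (convexOn_zpow (𝕜 := 𝕜) (-1)).comp_affineMap (AffineMap.lineMap d (d + c))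
  have hA : ∀ x : 𝕜, AffineMap.lineMap d (d + c) x = c * x + d := fun x => by
    simp only [AffineMap.lineMap_apply_ring']
    ring
  have hs : {x | 0 < c * x + d} = AffineMap.lineMap d (d + c) ⁻¹' Ioi 0 := by
    ext x
    simp only [mem_preimage, mem_Ioi, hA]
    rfl
  simp only [Function.comp_def, hA, zpow_neg_one] at h
  rw [hs]
  exact h

theorem concaveOn_div_mul_add {c d : 𝕜} (hc : 0 < c) (hd : 0 ≤ d) :
    ConcaveOn 𝕜 {x | 0 < c * x + d} fun x => x / (c * x + d) := by
  refine (((convexOn_inv_mul_add c d).smul (div_nonneg hd hc.le)).neg.add_const c⁻¹).congr ?_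
  intro x (hx : 0 < c * x + d)
  simp only [Pi.add_apply, Pi.neg_apply, smul_eq_mul]
  field_simp
  ring

theorem concaveOn_univ_pi_sum {ι : Type*} [Fintype ι] {s : Set 𝕜} {φ : ι → 𝕜 → 𝕜}
    (hs : Convex 𝕜 s) (hφ : ∀ i, ConcaveOn 𝕜 s (φ i)) :
    ConcaveOn 𝕜 (univ.pi fun _ => s) fun b => ∑ i, φ i (b i) := by
  refine concaveOn_finset_sum _ (convex_pi fun _ _ => hs) fun i _ => ?_
  exact ((hφ i).comp_linearMap (LinearMap.proj i)).subset
    (fun _ hb => mem_univ_pi.1 hb i) (convex_pi fun _ _ => hs)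

end LinearOrderedField

theorem policy2_hit_prob_concaveOn_cube_general
    (K n : ℕ)
    (ρ1 ρ2 : ℝ) (hρ1 : 0 < ρ1) (hρ2 : ρ2 ∈ Set.Ioo (0 : ℝ) 1)
    (P : Fin K → ℝ) (hP : ∀ i, 0 ≤ P i)
    (f : ℝ → ℝ) (hf : f = fun b => b / ((1 - ρ2) * b + ρ1 + ρ2)) :
    ConcaveOn ℝ (Set.Icc (0 : Fin K → ℝ) 1)
      (fun b : Fin K → ℝ => ∑ i, P i * (1 - (1 - f (b i)) ^ n)) := by
  obtain ⟨hρ2₀, hρ2₁⟩ := hρ2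
  subst hf
  have hf_concave : ConcaveOn ℝ (Icc 0 1) fun b => b / ((1 - ρ2) * b + ρ1 + ρ2) := by
    simp_rw [add_assoc]
    exact (concaveOn_div_mul_add (c := 1 - ρ2) (d := ρ1 + ρ2) (by linarith) (by linarith)).subset
      (fun b hb => show 0 < (1 - ρ2) * b + (ρ1 + ρ2) by nlinarith [hb.1]) (convex_Icc 0 1)
  have hf_le_one : ∀ b ∈ Icc (0 : ℝ) 1, b / ((1 - ρ2) * b + ρ1 + ρ2) ≤ 1 := fun b hb =>
    div_le_one_of_le₀ (by nlinarith [hb.2]) (by nlinarith [hb.1])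
  rw [← pi_univ_Icc]
  exact concaveOn_univ_pi_sum (convex_Icc 0 1) fun i =>
    (hf_concave.one_sub_one_sub_pow hf_le_one n).smul (hP i)

/-- The policy-2 hit probability
`G_n(b) = ∑ i, P i * (1 − (1 − f (b i))^n)` with
`f(b) = b/((1 − ρ₂) b + ρ₁ + ρ₂)` is concave on the cube `[0,1]^K`. -/
theorem policy2_hit_prob_concaveOn_cube
    (K n : ℕ) (hK : 1 ≤ K) (hn : 1 ≤ n)
    (ρ1 ρ2 : ℝ) (hρ1 : 0 < ρ1) (hρ2 : ρ2 ∈ Set.Ioo (0 : ℝ) 1)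
    (P : Fin K → ℝ) (hP : ∀ i, 0 ≤ P i)
    (f : ℝ → ℝ) (hf : f = fun b => b / ((1 - ρ2) * b + ρ1 + ρ2)) :
    ConcaveOn ℝ (Set.Icc (0 : Fin K → ℝ) 1)
      (fun b : Fin K → ℝ => ∑ i, P i * (1 - (1 - f (b i)) ^ n)) :=
  policy2_hit_prob_concaveOn_cube_general K n ρ1 ρ2 hρ1 hρ2 P hP f hf
end

section
/- Let K ≥ 1, n ≥ 2 an integer, ρ1 > 0, 0 < ρ2 < 1, and P_1,…,P_K > 0; set B = 1 − ρ2, C = ρ1 + ρ2, and f(b) = b/(B b + C). Suppose ν* ∈ ℝ and b* ∈ [0,1]^K satisfy ∑_{i=1}^K b_i* = 1, and for each i: b_i* = 0 whenever ν* < −P_i n / C; b_i* = 1 whenever ν* > −P_i n C (B + C − 1)^{n−1}/(B + C)^{n+1}; and otherwise b_i* ∈ (0,1) satisfies P_i n C ((B−1) b_i* + C)^{n−1}/(B b_i* + C)^{n+1} + ν* = 0. Then b* maximizes G_n(b) = ∑_{i=1}^K P_i (1 − (1 − f(b_i))^n) over D = {b ∈ [0,1]^K : ∑_{i=1}^K b_i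 = 1}. -/
/-!
The objective is a sum of functions `P i * g (b i)` with `g x = 1 - (1 - f x) ^ n`, and `g` is
concave on `[0, 1]`: `1 - f x = ((B - 1) x + C) / (B x + C)` is a nonnegative convex function there
and `t ↦ t ^ n` is convex and increasing on `[0, ∞)`. Hence `g` lies below its tangent lines, and the
KKT conditions say exactly that `P i * g' (b i) * (c i - b i) ≤ -ν * (c i - b i)` for every feasible
`c`. Summing and using `∑ c i = ∑ b i` makes the multiplier term vanish.
-/

open Finset Set

theorem Finset.sum_le_sum_of_le_sub_mul {ι R : Type*} [CommRing R] [PartialOrder R]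
    [IsOrderedRing R] (s : Finset ι) {u v b c : ι → R} {ν : R}
    (h : ∀ i ∈ s, u i ≤ v i - ν * (c i - b i)) (hcb : ∑ i ∈ s, c i = ∑ i ∈ s, b i) :
    ∑ i ∈ s, u i ≤ ∑ i ∈ s, v i :=
  calc ∑ i ∈ s, u i ≤ ∑ i ∈ s, (v i - ν * (c i - b i)) := sum_le_sum h
    _ = ∑ i ∈ s, v i - ν * (∑ i ∈ s, c i - ∑ i ∈ s, b i) := by
      rw [sum_sub_distrib, ← mul_sum, sum_sub_distrib]
    _ = ∑ i ∈ s, v i := by rw [hcb, sub_self, mul_zero, sub_zero]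

theorem mul_sub_le_of_complementary_slackness {d ν x y : ℝ} (hy : y ∈ Icc (0 : ℝ) 1)
    (h : (x = 0 ∧ d ≤ -ν) ∨ (x = 1 ∧ -ν ≤ d) ∨ d = -ν) :
    d * (y - x) ≤ -ν * (y - x) := by
  obtain ⟨hy₀, hy₁⟩ := hy
  rcases h with ⟨rfl, hd⟩ | ⟨rfl, hd⟩ | rfl
  · nlinarith
  · nlinarith
  · rfl

/-- `1 - f x`, the failure probability of a single transmission. -/
noncomputable def missProb (B C x : ℝ) : ℝ := 1 - x / (B * x + C)

/-- The derivative of `x ↦ 1 - missProb B C x ^ n`. -/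
noncomputable def hitSlope (n : ℕ) (B C x : ℝ) : ℝ :=
  n * C * ((B - 1) * x + C) ^ (n - 1) / (B * x + C) ^ (n + 1)

variable {B C : ℝ}

theorem missProb_eq_div {x : ℝ} (hx : B * x + C ≠ 0) :
    missProb B C x = ((B - 1) * x + C) / (B * x + C) := by
  rw [missProb, one_sub_div hx]
  ring

theorem missProb_nonneg (hB : 0 ≤ B) (hC : 0 < C) (hBC : 1 ≤ B + C) {x : ℝ}
    (hx : x ∈ Icc (0 : ℝ) 1) : 0 ≤ missProb B C x := by
  obtain ⟨hx₀, hx₁⟩ := hx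
  have hu : 0 < B * x + C := by positivity
  rw [missProb_eq_div hu.ne']
  have : 0 ≤ (B - 1) * x + C := by nlinarith
  exact div_nonneg this hu.le

theorem missProb_tangent_le (hB : 0 ≤ B) (hC : 0 < C) {x y : ℝ} (hx : 0 ≤ x) (hy : 0 ≤ y) :
    missProb B C x - C / (B * x + C) ^ 2 * (y - x) ≤ missProb B C y := by
  have hu : 0 < B * x + C := by positivity
  have hv : 0 < B * y + C := by positivity
  have hgap : missProb B C y - (missProb B C x - C / (B * x + C) ^ 2 * (y - x))
      = C * B * (y - x) ^ 2 / ((B * x + C) ^ 2 * (B * y + C)) := by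
    rw [missProb, missProb]
    field_simp
    ring
  have : 0 ≤ C * B * (y - x) ^ 2 / ((B * x + C) ^ 2 * (B * y + C)) := by positivity
  linarith

theorem hitSlope_eq (hB : 0 ≤ B) (hC : 0 < C) (n : ℕ) {x : ℝ} (hx : 0 ≤ x) :
    hitSlope n B C x = n * missProb B C x ^ (n - 1) * (C / (B * x + C) ^ 2) := by
  have hu : B * x + C ≠ 0 := by positivity
  rcases n with _ | n
  · simp [hitSlope]
  · rw [hitSlope, missProb_eq_div hu, div_pow, Nat.add_sub_cancel]
    field_simp
    ring

theorem one_sub_missProb_pow_le (hB : 0 ≤ B) (hC : 0 < C) (hBC : 1 ≤ B + C) (n : ℕ)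
    {x y : ℝ} (hx : x ∈ Icc (0 : ℝ) 1) (hy : y ∈ Icc (0 : ℝ) 1) :
    1 - missProb B C y ^ n ≤ 1 - missProb B C x ^ n + hitSlope n B C x * (y - x) := by
  have hpx := missProb_nonneg hB hC hBC hx
  have hpy := missProb_nonneg hB hC hBC hy
  have hbernoulli := pow_add_mul_le_add_pow hpx (by linarith : 0 ≤ 2 * missProb B C x +
    (missProb B C y - missProb B C x)) n
  rw [add_sub_cancel] at hbernoulli
  have hlinear := mul_le_mul_of_nonneg_left (missProb_tangent_le hB hC hx.1 hy.1)
    (by positivity : (0 : ℝ) ≤ n * missProb B C x ^ (n - 1))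
  rw [hitSlope_eq hB hC n hx.1]
  linear_combination hbernoulli + hlinear

theorem hitSlope_zero (hC : C ≠ 0) (n : ℕ) : hitSlope n B C 0 = n / C := by
  rcases n with _ | n
  · simp [hitSlope]
  · simp only [hitSlope, mul_zero, zero_add, Nat.add_sub_cancel]
    field_simp
    ring

theorem hitSlope_one (n : ℕ) :
    hitSlope n B C 1 = n * C * (B + C - 1) ^ (n - 1) / (B + C) ^ (n + 1) := by
  simp only [hitSlope, mul_one]
  ring

theorem complementary_slackness_of_thresholds (hC : C ≠ 0) {n : ℕ} {p ν x : ℝ}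
    (hzero : ν < -(p * n / C) → x = 0)
    (hone : -(p * n * C * (B + C - 1) ^ (n - 1) / (B + C) ^ (n + 1)) < ν → x = 1)
    (hmid : -(p * n / C) ≤ ν → ν ≤ -(p * n * C * (B + C - 1) ^ (n - 1) / (B + C) ^ (n + 1)) →
      p * n * C * ((B - 1) * x + C) ^ (n - 1) / (B * x + C) ^ (n + 1) + ν = 0) :
    (x = 0 ∧ p * hitSlope n B C x ≤ -ν) ∨ (x = 1 ∧ -ν ≤ p * hitSlope n B C x) ∨
      p * hitSlope n B C x = -ν := by
  by_cases h₀ : ν < -(p * n / C)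
  · obtain rfl := hzero h₀
    refine .inl ⟨rfl, ?_⟩
    rw [hitSlope_zero hC, ← mul_div_assoc]
    linarith
  by_cases h₁ : -(p * n * C * (B + C - 1) ^ (n - 1) / (B + C) ^ (n + 1)) < ν
  · obtain rfl := hone h₁
    refine .inr (.inl ⟨rfl, ?_⟩)
    rw [hitSlope_one, ← mul_div_assoc, ← mul_assoc, ← mul_assoc]
    linarith
  · have hkkt := hmid (not_lt.1 h₀) (not_lt.1 h₁)
    refine .inr (.inr ?_)
    rw [hitSlope]
    linear_combination hkkt

theorem kkt_point_maximizes_hit_prob_policy2_general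
    (K n : ℕ)
    (ρ1 ρ2 : ℝ) (hρ1 : 0 < ρ1) (hρ2 : ρ2 ∈ Set.Ioo (0 : ℝ) 1)
    (P : Fin K → ℝ) (hP : ∀ i, 0 < P i)
    (B C : ℝ) (hB : B = 1 - ρ2) (hC : C = ρ1 + ρ2)
    (f : ℝ → ℝ) (hf : f = fun b => b / (B * b + C))
    (ν : ℝ) (b : Fin K → ℝ)
    (hbmem : ∀ i, b i ∈ Set.Icc (0 : ℝ) 1)
    (hsum : ∑ i, b i = 1)
    (hzero : ∀ i, ν < -(P i * n / C) → b i = 0)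
    (hone : ∀ i, -(P i * n * C * (B + C - 1) ^ (n - 1) / (B + C) ^ (n + 1)) < ν → b i = 1)
    (hmid : ∀ i, -(P i * n / C) ≤ ν →
      ν ≤ -(P i * n * C * (B + C - 1) ^ (n - 1) / (B + C) ^ (n + 1)) →
      b i ∈ Set.Ioo (0 : ℝ) 1 ∧
        P i * n * C * ((B - 1) * b i + C) ^ (n - 1) / (B * b i + C) ^ (n + 1) + ν = 0) :
    ∀ c : Fin K → ℝ, (∀ i, c i ∈ Set.Icc (0 : ℝ) 1) → ∑ i, c i = 1 →
      ∑ i, P i * (1 - (1 - f (c i)) ^ n) ≤ ∑ i, P i * (1 - (1 - f (b i)) ^ n) := by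
  intro c hcmem hcsum
  subst hf
  obtain ⟨hρ2₀, hρ2₁⟩ := hρ2
  have hB₀ : 0 ≤ B := by rw [hB]; linarith
  have hC₀ : 0 < C := by rw [hC]; linarith
  have hBC : 1 ≤ B + C := by rw [hB, hC]; linarith
  refine sum_le_sum_of_le_sub_mul univ (ν := ν) (fun i _ => ?_) (hcsum.trans hsum.symm)
  have htangent := mul_le_mul_of_nonneg_left
    (one_sub_missProb_pow_le hB₀ hC₀ hBC n (hbmem i) (hcmem i)) (hP i).le
  have hslack := mul_sub_le_of_complementary_slackness (hcmem i) <|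
    complementary_slackness_of_thresholds hC₀.ne' (hzero i) (hone i) fun h₀ h₁ ↦ (hmid i h₀ h₁).2
  change P i * (1 - missProb B C (c i) ^ n) ≤ P i * (1 - missProb B C (b i) ^ n) - _
  linear_combination htangent + hslack

/-- If `b*` together with a multiplier `ν*` satisfies the KKT-form
description from Theorem 2 (policy 2, mobile user, `L = 1`), then `b*`
maximizes the hit probability `G_n` over `{b ∈ [0,1]^K : ∑ b i = 1}`. -/
theorem kkt_point_maximizes_hit_prob_policy2
    (K n : ℕ) (hK : 1 ≤ K) (hn : 2 ≤ n)
    (ρ1 ρ2 : ℝ) (hρ1 : 0 < ρ1) (hρ2 : ρ2 ∈ Set.Ioo (0 : ℝ) 1)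
    (P : Fin K → ℝ) (hP : ∀ i, 0 < P i)
    (B C : ℝ) (hB : B = 1 - ρ2) (hC : C = ρ1 + ρ2)
    (f : ℝ → ℝ) (hf : f = fun b => b / (B * b + C))
    (ν : ℝ) (b : Fin K → ℝ)
    (hbmem : ∀ i, b i ∈ Set.Icc (0 : ℝ) 1)
    (hsum : ∑ i, b i = 1)
    (hzero : ∀ i, ν < -(P i * n / C) → b i = 0)
    (hone : ∀ i, -(P i * n * C * (B + C - 1) ^ (n - 1) / (B + C) ^ (n + 1)) < ν → b i = 1)
    (hmid : ∀ i, -(P i * n / C) ≤ ν →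
      ν ≤ -(P i * n * C * (B + C - 1) ^ (n - 1) / (B + C) ^ (n + 1)) →
      b i ∈ Set.Ioo (0 : ℝ) 1 ∧
        P i * n * C * ((B - 1) * b i + C) ^ (n - 1) / (B * b i + C) ^ (n + 1) + ν = 0) :
    ∀ c : Fin K → ℝ, (∀ i, c i ∈ Set.Icc (0 : ℝ) 1) → ∑ i, c i = 1 →
      ∑ i, P i * (1 - (1 - f (c i)) ^ n) ≤ ∑ i, P i * (1 - (1 - f (b i)) ^ n) :=
  kkt_point_maximizes_hit_prob_policy2_general K n ρ1 ρ2 hρ1 hρ2 P hP B C hB hC f hf ν b hbmem hsum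
    hzero hone hmid
end

section
/- Let K ≥ 1, ρ1 > 0, 0 < ρ2 < 1, and P_1,…,P_K > 0; set B = 1 − ρ2, C = ρ1 + ρ2, and f(b) = b/(B b + C). Let 1 ≤ K* ≤ K and ε > 0 satisfy √ε = (∑_{i=1}^{K*} √P_i) / ((K*−1) ρ1 + K* ρ2 + 1), and define b_i* = max(0, (√(P_i/ε) − (ρ1 + ρ2)) / (1 − ρ2)) for i = 1,…,K. If 0 ≤ b_i* ≤ 1 for every i, b_i* > 0 exactly for i ≤ K*, and ∑_{i=1}^K b_i* = 1, then b* maximizes G_1(b) = ∑_{i=1}^K P_i f(b_i) over D = {b ∈ [0,1]^K : ∑_{i=1}^K b_i = 1}. -/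
/-!
The objective `∑ i, P i * f (b i)` is separable and concave, so the KKT conditions are
sufficient: it is enough that every marginal `P i * f' (b i) = P i * C / (B b i + C) ^ 2` equals a
common multiplier on the support of `b` and is at most that multiplier off it. For the
water-filling point `B b i + C = max C √(P i / ε)`, so the multiplier is `C ε`.
-/

open Finset

theorem sum_le_sum_of_sub_le_mul_sub {ι : Type*} (s : Finset ι) (u v x y : ι → ℝ) (m : ℝ)
    (h : ∀ i ∈ s, u i - v i ≤ m * (x i - y i)) (hxy : ∑ i ∈ s, x i = ∑ i ∈ s, y i) :
    ∑ i ∈ s, u i ≤ ∑ i ∈ s, v i := by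
  have hsum := sum_le_sum h
  rw [sum_sub_distrib, ← mul_sum, sum_sub_distrib, hxy, sub_self, mul_zero] at hsum
  linarith

section Waterfilling

variable {B C : ℝ}

theorem div_affine_sub_le_tangent (hB : 0 ≤ B) (hC : 0 < C) {x y : ℝ} (hx : 0 ≤ x) (hy : 0 ≤ y) :
    y / (B * y + C) - x / (B * x + C) ≤ C / (B * x + C) ^ 2 * (y - x) := by
  have hdx : 0 < B * x + C := by positivity
  have hdy : 0 < B * y + C := by positivity
  have gap : C / (B * x + C) ^ 2 * (y - x) - (y / (B * y + C) - x / (B * x + C))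
      = C * B * (y - x) ^ 2 / ((B * x + C) ^ 2 * (B * y + C)) := by
    field_simp
    ring
  have : 0 ≤ C * B * (y - x) ^ 2 / ((B * x + C) ^ 2 * (B * y + C)) := by positivity
  linarith

theorem mul_max_zero_sub_div_add (hB : 0 < B) (s : ℝ) :
    B * max 0 ((s - C) / B) + C = max C s := by
  rcases le_total s C with h | h
  · rw [max_eq_left (div_nonpos_of_nonpos_of_nonneg (sub_nonpos.2 h) hB.le), max_eq_left h]
    ring
  · rw [max_eq_right (div_nonneg (sub_nonneg.2 h) hB.le), max_eq_right h]
    field_simp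
    ring

theorem waterfilling_term_le (hB : 0 < B) (hC : 0 < C) {P ε : ℝ} (hP : 0 < P) (hε : 0 < ε)
    {x y : ℝ} (hx : x = max 0 ((√(P / ε) - C) / B)) (hy : 0 ≤ y) :
    P * (y / (B * y + C)) - P * (x / (B * x + C)) ≤ C * ε * (y - x) := by
  have hx0 : 0 ≤ x := hx ▸ le_max_left _ _
  have hden : B * x + C = max C √(P / ε) := hx ▸ mul_max_zero_sub_div_add hB _
  have hsq : √(P / ε) ^ 2 = P / ε := Real.sq_sqrt (div_nonneg hP.le hε.le)
  have tangent : P * (y / (B * y + C)) - P * (x / (B * x + C))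
      ≤ P * (C / (B * x + C) ^ 2) * (y - x) := by
    have := mul_le_mul_of_nonneg_left (div_affine_sub_le_tangent hB.le hC hx0 hy) hP.le
    linarith
  refine tangent.trans ?_
  rcases le_total √(P / ε) C with hsC | hCs
  · -- off the support, `x = 0` and the marginal `P / C` is at most `C ε`
    have hx_eq : x = 0 := by
      rw [hx, max_eq_left (div_nonpos_of_nonpos_of_nonneg (sub_nonpos.2 hsC) hB.le)]
    have hPC : P ≤ C ^ 2 * ε := by
      have : P / ε ≤ C ^ 2 := hsq ▸ pow_le_pow_left₀ (Real.sqrt_nonneg _) hsC 2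
      rwa [div_le_iff₀ hε] at this
    rw [hden, max_eq_left hsC, hx_eq, sub_zero]
    refine mul_le_mul_of_nonneg_right ?_ hy
    rw [mul_div_assoc', div_le_iff₀ (by positivity)]
    nlinarith
  · refine le_of_eq ?_
    rw [hden, max_eq_right hCs, hsq]
    field_simp

end Waterfilling

theorem single_transmission_policy2_optimal_general
    (K : ℕ)
    (ρ1 ρ2 : ℝ) (hρ1 : 0 < ρ1) (hρ2 : ρ2 ∈ Set.Ioo (0 : ℝ) 1)
    (P : Fin K → ℝ) (hP : ∀ i, 0 < P i)
    (B C : ℝ) (hB : B = 1 - ρ2) (hC : C = ρ1 + ρ2)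
    (f : ℝ → ℝ) (hf : f = fun b => b / (B * b + C))
    (ε : ℝ) (hε : 0 < ε)
    (b : Fin K → ℝ)
    (hb : ∀ i, b i = max 0 ((Real.sqrt (P i / ε) - (ρ1 + ρ2)) / (1 - ρ2)))
    (hsum : ∑ i, b i = 1) :
    ∀ c : Fin K → ℝ, (∀ i, c i ∈ Set.Icc (0 : ℝ) 1) → ∑ i, c i = 1 →
      ∑ i, P i * f (c i) ≤ ∑ i, P i * f (b i) := by
  intro c hc hcsum
  obtain ⟨hρ2_pos, hρ2_lt_one⟩ := hρ2
  have hB_pos : 0 < B := by linarith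
  have hC_pos : 0 < C := by linarith
  rw [← hB, ← hC] at hb
  subst hf
  exact sum_le_sum_of_sub_le_mul_sub _ _ _ _ _ (C * ε)
    (fun i _ => waterfilling_term_le hB_pos hC_pos (hP i) hε (hb i) (hc i).1)
    (hcsum.trans hsum.symm)

/-- The water-filling-type solution
`b_i* = max(0, (√(P_i/ε) − (ρ₁ + ρ₂))/(1 − ρ₂))`, with `√ε` determined by the
first `K*` files, maximizes the single-transmission policy-2 hit probability
`G₁(b) = ∑ i, P i * f (b i)` over `{b ∈ [0,1]^K : ∑ b i = 1}`. -/
theorem single_transmission_policy2_optimal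
    (K : ℕ) (hK : 1 ≤ K)
    (ρ1 ρ2 : ℝ) (hρ1 : 0 < ρ1) (hρ2 : ρ2 ∈ Set.Ioo (0 : ℝ) 1)
    (P : Fin K → ℝ) (hP : ∀ i, 0 < P i)
    (B C : ℝ) (hB : B = 1 - ρ2) (hC : C = ρ1 + ρ2)
    (f : ℝ → ℝ) (hf : f = fun b => b / (B * b + C))
    (Kstar : ℕ) (hK1 : 1 ≤ Kstar) (hKK : Kstar ≤ K)
    (ε : ℝ) (hε : 0 < ε)
    (hsqrtε : Real.sqrt ε =
      (∑ i ∈ Finset.univ.filter (fun i : Fin K => (i : ℕ) < Kstar), Real.sqrt (P i)) /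
        (((Kstar : ℝ) - 1) * ρ1 + (Kstar : ℝ) * ρ2 + 1))
    (b : Fin K → ℝ)
    (hb : ∀ i, b i = max 0 ((Real.sqrt (P i / ε) - (ρ1 + ρ2)) / (1 - ρ2)))
    (hrange : ∀ i, b i ∈ Set.Icc (0 : ℝ) 1)
    (hsupp : ∀ i : Fin K, 0 < b i ↔ (i : ℕ) < Kstar)
    (hsum : ∑ i, b i = 1) :
    ∀ c : Fin K → ℝ, (∀ i, c i ∈ Set.Icc (0 : ℝ) 1) → ∑ i, c i = 1 →
      ∑ i, P i * f (c i) ≤ ∑ i, P i * f (b i) :=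
  single_transmission_policy2_optimal_general K ρ1 ρ2 hρ1 hρ2 P hP B C hB hC f hf ε hε b hb hsum
end

section
/- Let K ≥ 1 and 1 ≤ L ≤ K be integers, p ∈ (0,1], and P_1,…,P_K > 0. For each integer n ≥ 2 let b^{(n)} be a maximizer of H_n(b) = ∑_{i=1}^K P_i (1 − (1 − b_i p)^n) over D_L = {b ∈ [0,1]^K : ∑_{i=1}^K b_i = L}. Then for every i, b_i^{(n)} → L/K as n → ∞; i.e., with a large number of retransmissions it is asymptotically optimal to cache all files evenly. -/
/-!
Comparing a maximizer `b` with the uniform cache `c = L/K` gives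
`∑ⱼ Pⱼ (1 - bⱼ p)ⁿ ≤ (∑ⱼ Pⱼ) (1 - c p)ⁿ`, so each single term yields
`1 - bⱼ p ≤ (∑ₖ Pₖ / Pⱼ)^(1/n) (1 - c p)`. As `n → ∞` the root tends to `1`, so every coordinate
is eventually almost at least `c`; since the coordinates sum to `K c`, none can be much larger.
-/

open Filter Topology Finset

theorem tendsto_of_forall_le_of_sum_eq {α ι E : Type*} [Fintype ι]
    [AddCommGroup E] [LinearOrder E] [IsOrderedAddMonoid E] [TopologicalSpace E]
    [OrderTopology E] [IsTopologicalAddGroup E]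
    {l : Filter α} {f g : ι → α → E} {a : ι → E}
    (hg : ∀ j, Tendsto (g j) l (𝓝 (a j))) (hle : ∀ᶠ x in l, ∀ j, g j x ≤ f j x)
    (hsum : ∀ᶠ x in l, ∑ j, f j x = ∑ j, a j) (i : ι) :
    Tendsto (f i) l (𝓝 (a i)) := by
  classical
  have hupper : Tendsto (fun x => ∑ j, a j - ∑ j ∈ univ.erase i, g j x) l
      (𝓝 (∑ j, a j - ∑ j ∈ univ.erase i, a j)) :=
    tendsto_const_nhds.sub (tendsto_finsetSum _ fun j _ => hg j)
  rw [sum_erase_eq_sub (mem_univ i), sub_sub_cancel] at hupper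
  refine tendsto_of_tendsto_of_tendsto_of_le_of_le' (hg i) hupper
    (hle.mono fun x hx => hx i) ?_
  filter_upwards [hle, hsum] with x hx hx_sum
  rw [← hx_sum, ← add_sum_erase _ _ (mem_univ i), add_sub_assoc]
  exact le_add_of_nonneg_right (sub_nonneg.2 (sum_le_sum fun j _ => hx j))

theorem le_rpow_inv_mul_of_pow_le {x y C : ℝ} {n : ℕ} (hn : n ≠ 0) (hy : 0 ≤ y) (hC : 0 ≤ C)
    (h : x ^ n ≤ C * y ^ n) : x ≤ C ^ (n : ℝ)⁻¹ * y := by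
  refine le_of_pow_le_pow_left₀ hn (by positivity) ?_
  rwa [mul_pow, Real.rpow_inv_natCast_pow hC hn]

theorem le_rpow_inv_mul_of_sum_mul_pow_le {ι : Type*} [Fintype ι] {w x : ι → ℝ} {q : ℝ}
    {n : ℕ} (hn : n ≠ 0) (hw : ∀ k, 0 ≤ w k) (hx : ∀ k, 0 ≤ x k) (hq : 0 ≤ q)
    (h : ∑ k, w k * x k ^ n ≤ (∑ k, w k) * q ^ n) {j : ι} (hwj : 0 < w j) :
    x j ≤ ((∑ k, w k) / w j) ^ (n : ℝ)⁻¹ * q := by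
  have hterm : w j * x j ^ n ≤ (∑ k, w k) * q ^ n :=
    (single_le_sum (fun k _ => mul_nonneg (hw k) (pow_nonneg (hx k) n)) (mem_univ j)).trans h
  refine le_rpow_inv_mul_of_pow_le hn hq (div_nonneg (sum_nonneg fun k _ => hw k) hwj.le) ?_
  rwa [div_mul_eq_mul_div, le_div_iff₀' hwj]

theorem tendsto_const_rpow_inv_natCast {C : ℝ} (hC : 0 < C) :
    Tendsto (fun n : ℕ => C ^ (n : ℝ)⁻¹) atTop (𝓝 1) := by
  have h := (Real.continuousAt_const_rpow (b := 0) hC.ne').tendsto.comp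
    (tendsto_inv_atTop_zero.comp tendsto_natCast_atTop_atTop)
  rwa [Real.rpow_zero] at h

def hitProbability {ι : Type*} [Fintype ι] (P : ι → ℝ) (p : ℝ) (n : ℕ) (b : ι → ℝ) : ℝ :=
  ∑ i, P i * (1 - (1 - b i * p) ^ n)

theorem le_of_hitProbability_const_le {ι : Type*} [Fintype ι] {P b : ι → ℝ} {p c : ℝ} {n : ℕ}
    (hn : n ≠ 0) (hP : ∀ k, 0 < P k) (hp : 0 < p) (hbp : ∀ k, b k * p ≤ 1) (hcp : c * p ≤ 1)
    (h : hitProbability P p n (fun _ => c) ≤ hitProbability P p n b) (j : ι) :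
    (1 - ((∑ k, P k) / P j) ^ (n : ℝ)⁻¹ * (1 - c * p)) / p ≤ b j := by
  have hmiss : ∑ k, P k * (1 - b k * p) ^ n ≤ (∑ k, P k) * (1 - c * p) ^ n := by
    simp only [hitProbability, mul_sub, mul_one, sum_sub_distrib, ← sum_mul] at h
    linarith
  have := le_rpow_inv_mul_of_sum_mul_pow_le hn (fun k => (hP k).le)
    (fun k => sub_nonneg.2 (hbp k)) (sub_nonneg.2 hcp) hmiss (hP j)
  rw [div_le_iff₀ hp]
  linarith

theorem maximizers_tendsto_uniform_general
    (K L : ℕ) (hLK : L ≤ K)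
    (p : ℝ) (hp : p ∈ Set.Ioc (0 : ℝ) 1) (P : Fin K → ℝ) (hP : ∀ i, 0 < P i)
    (b : ℕ → Fin K → ℝ)
    (hmem : ∀ n : ℕ, 2 ≤ n → ∀ i, b n i ∈ Set.Icc (0 : ℝ) 1)
    (hsum : ∀ n : ℕ, 2 ≤ n → ∑ i, b n i = (L : ℝ))
    (hmax : ∀ n : ℕ, 2 ≤ n →
      ∀ c : Fin K → ℝ, (∀ i, c i ∈ Set.Icc (0 : ℝ) 1) → ∑ i, c i = (L : ℝ) →
        ∑ i, P i * (1 - (1 - c i * p) ^ n) ≤ ∑ i, P i * (1 - (1 - b n i * p) ^ n)) :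
    ∀ i, Filter.Tendsto (fun n => b n i) Filter.atTop (nhds ((L : ℝ) / K)) := by
  intro i
  obtain ⟨hp0, hp1⟩ := hp
  have hK : (K : ℝ) ≠ 0 := Nat.cast_ne_zero.2 i.pos.ne'
  set c : ℝ := L / K
  have hc : c ∈ Set.Icc (0 : ℝ) 1 :=
    ⟨by positivity, div_le_one_of_le₀ (by exact_mod_cast hLK) K.cast_nonneg⟩
  have hc_sum : ∑ _j : Fin K, c = L := by simp [c, mul_div_cancel₀ _ hK]
  have hmul_le_one {x : ℝ} (hx : x ∈ Set.Icc (0 : ℝ) 1) : x * p ≤ 1 := by nlinarith [hx.2]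
  have hlow : ∀ n : ℕ, 2 ≤ n → ∀ j,
      (1 - ((∑ k, P k) / P j) ^ (n : ℝ)⁻¹ * (1 - c * p)) / p ≤ b n j := fun n hn =>
    le_of_hitProbability_const_le (by omega) hP hp0 (fun k => hmul_le_one (hmem n hn k))
      (hmul_le_one hc) (hmax n hn _ (fun _ => hc) hc_sum)
  refine tendsto_of_forall_le_of_sum_eq (a := fun _ => c) (fun j => ?_)
    ((eventually_ge_atTop 2).mono hlow)
    ((eventually_ge_atTop 2).mono fun n hn => (hsum n hn).trans hc_sum.symm) i
  have hroot := tendsto_const_rpow_inv_natCast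
    (div_pos (sum_pos (fun k _ => hP k) ⟨i, mem_univ i⟩) (hP j))
  convert (hroot.mul_const (1 - c * p)).const_sub 1 |>.div_const p using 2
  field_simp
  ring

/-- Any sequence of maximizers `b^{(n)}` of the policy-1 hit
probability `H_n` over `D_L = {b ∈ [0,1]^K : ∑ b i = L}` converges
coordinatewise to the uniform cache `L/K` as `n → ∞`. -/
theorem maximizers_tendsto_uniform
    (K L : ℕ) (hK : 1 ≤ K) (hL1 : 1 ≤ L) (hLK : L ≤ K)
    (p : ℝ) (hp : p ∈ Set.Ioc (0 : ℝ) 1) (P : Fin K → ℝ) (hP : ∀ i, 0 < P i)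
    (b : ℕ → Fin K → ℝ)
    (hmem : ∀ n : ℕ, 2 ≤ n → ∀ i, b n i ∈ Set.Icc (0 : ℝ) 1)
    (hsum : ∀ n : ℕ, 2 ≤ n → ∑ i, b n i = (L : ℝ))
    (hmax : ∀ n : ℕ, 2 ≤ n →
      ∀ c : Fin K → ℝ, (∀ i, c i ∈ Set.Icc (0 : ℝ) 1) → ∑ i, c i = (L : ℝ) →
        ∑ i, P i * (1 - (1 - c i * p) ^ n) ≤ ∑ i, P i * (1 - (1 - b n i * p) ^ n)) :
    ∀ i, Filter.Tendsto (fun n => b n i) Filter.atTop (nhds ((L : ℝ) / K)) :=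
  maximizers_tendsto_uniform_general K L hLK p hp P hP b hmem hsum hmax
end
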